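/- For every ε > 0, every spin field v : Ω⁰_ε → S¹, and every pair of nearest neighbors (i, j) ∈ Ω¹_ε, one has 2π · dist(u(v)(i) − u(v)(j), ℤ) = d_{S¹}(v(i), v(j)), where u(v) = θ(v)/(2π) with θ(v) ∈ [0, 2π) the phase of v, and d_{S¹} is the geodesic distance on the unit circle. Consequently XY_ε(v) ≤ 4π² SD_ε(u(v)), where XY_ε(v) = ½ Σ_{(i,j)} |v(i) − v(j)|² and SD_ε(u) = ½ Σ_{(i,j)} dist²(u(i) − u(j), ℤ). -/

import Mathlib

open MeasureTheory Filter

noncomputable section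

/-- The position in `ℝ²` of the lattice point `i ∈ ℤ²` of the lattice `εℤ²`. -/
def pt (ε : ℝ) (i : ℤ × ℤ) : ℝ × ℝ := (ε * i.1, ε * i.2)

/-- `i` is a point of the lattice `Ω⁰_ε = εℤ² ∩ Ω`. -/
def latticePt (ε : ℝ) (Ω : Set (ℝ × ℝ)) (i : ℤ × ℤ) : Prop := pt ε i ∈ Ω

/-- `(i, j)` is a nearest-neighbor bond in `Ω¹_ε`: both endpoints lie in `Ω` and
`j = i + e₁` or `j = i + e₂` (so that `|i − j| = ε` and `i ≤ j` componentwise). -/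
def bond (ε : ℝ) (Ω : Set (ℝ × ℝ)) (i j : ℤ × ℤ) : Prop :=
  latticePt ε Ω i ∧ latticePt ε Ω j ∧ (j = i + (1, 0) ∨ j = i + (0, 1))

/-- `i ∈ Ω²_ε`: the closed cell `i + [0, ε]²` is contained in `Ω`. -/
def cellIn (ε : ℝ) (Ω : Set (ℝ × ℝ)) (i : ℤ × ℤ) : Prop :=
  Set.Icc (pt ε i) (pt ε i + (ε, ε)) ⊆ Ω

/-- The center of the cell `i + [0, ε]²`. -/
def cellCenter (ε : ℝ) (i : ℤ × ℤ) : ℝ × ℝ := pt ε i + (ε / 2, ε / 2)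

/-- The projection `P : ℝ → ℤ` onto the nearest integer (with the tie-breaking convention
making `t − P t ∈ (−1/2, 1/2]`). -/
def Pint (t : ℝ) : ℤ := ⌈t - 1 / 2⌉

/-- The elastic part of the discrete strain of `u` on the (oriented) bond from `i` to `j`:
`β^e_u = 𝐝u − P(𝐝u) ∈ (−1/2, 1/2]`, where `𝐝u_{i,j} = u(j) − u(i)`. -/
def betaE (u : ℤ × ℤ → ℝ) (i j : ℤ × ℤ) : ℝ :=
  (u j - u i) - (Pint (u j - u i) : ℝ)

/-- The plastic part of the discrete strain: `β^p_u = P(𝐝u) ∈ ℤ`. -/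
def betaP (u : ℤ × ℤ → ℝ) (i j : ℤ × ℤ) : ℝ := (Pint (u j - u i) : ℝ)

/-- The discrete curl of a bond function `ξ` around the cell with lower-left corner `i`:
`𝐝ξ(i) = ξ_{i,i+e₂} + ξ_{i+e₂,i+e₁+e₂} − ξ_{i+e₁,i+e₁+e₂} − ξ_{i,i+e₁}`. -/
def dcurl (ξ : ℤ × ℤ → ℤ × ℤ → ℝ) (i : ℤ × ℤ) : ℝ :=
  ξ i (i + (0, 1)) + ξ (i + (0, 1)) (i + (1, 1)) - ξ (i + (1, 0)) (i + (1, 1)) -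
    ξ i (i + (1, 0))

/-- The discrete dislocation function `α_u(i) = 𝐝β^e_u(i)`. -/
def alphaSD (u : ℤ × ℤ → ℝ) (i : ℤ × ℤ) : ℝ := dcurl (betaE u) i

/-- The discrete screw-dislocation energy
`SD_ε(u) = ½ Σ_{(i,j) ∈ Ω¹_ε} dist²(u(i) − u(j), ℤ)`. -/
def SDen (ε : ℝ) (Ω : Set (ℝ × ℝ)) (u : ℤ × ℤ → ℝ) : ℝ :=
  (1 / 2) * ∑' b : {b : (ℤ × ℤ) × (ℤ × ℤ) // bond ε Ω b.1 b.2},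
    (betaE u b.1.1 b.1.2) ^ 2

/-- The total variation `|μ_u|(Ω)` of the discrete dislocation measure
`μ_u = Σ_{i ∈ Ω²_ε} α_u(i) δ_{i+(ε/2,ε/2)}`. -/
def SDtv (ε : ℝ) (Ω : Set (ℝ × ℝ)) (u : ℤ × ℤ → ℝ) : ℝ :=
  ∑' i : {i : ℤ × ℤ // cellIn ε Ω i}, |alphaSD u i|

/-- The phase `u(v) = θ(v)/2π ∈ [0, 1)` of a spin field `v` with values in `S¹ ⊆ ℂ`
(defined by `v = e^{2πi u(v)}`; any determination of the phase gives the same discrete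
vorticity). -/
def phaseu (v : ℤ × ℤ → ℂ) (l : ℤ × ℤ) : ℝ :=
  if 0 ≤ (v l).arg then (v l).arg / (2 * Real.pi) else (v l).arg / (2 * Real.pi) + 1

/-- The discrete vorticity `γ_v = α_{θ(v)/2π}` of a spin field `v`. -/
def gammaXY (v : ℤ × ℤ → ℂ) (i : ℤ × ℤ) : ℝ := alphaSD (phaseu v) i

/-- The `XY` energy `XY_ε(v) = ½ Σ_{(i,j) ∈ Ω¹_ε} |v(i) − v(j)|²`. -/
def XYen (ε : ℝ) (Ω : Set (ℝ × ℝ)) (v : ℤ × ℤ → ℂ) : ℝ :=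
  (1 / 2) * ∑' b : {b : (ℤ × ℤ) × (ℤ × ℤ) // bond ε Ω b.1 b.2},
    ‖v b.1.1 - v b.1.2‖ ^ 2

/-- The total variation `|μ_v|(Ω)` of the discrete vorticity measure. -/
def XYtv (ε : ℝ) (Ω : Set (ℝ × ℝ)) (v : ℤ × ℤ → ℂ) : ℝ :=
  ∑' i : {i : ℤ × ℤ // cellIn ε Ω i}, |gammaXY v i|

/-- The distance from a real number to `ℤ`. -/
def distZ (t : ℝ) : ℝ := |t - (Pint t : ℝ)|

/-- The geodesic distance on the unit circle `S¹ ⊆ ℂ` between two unit vectors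
(the angle between them, in `[0, π]`). -/
def dS1 (a b : ℂ) : ℝ := |(a * (starRingEnd ℂ) b).arg|

/-!
Writing `v = e^{iθ}`, the phase difference `2π (u(v)(i) − u(v)(j))` and the angle `arg (v(i) v̄(j))`
agree modulo `2π`. The convention `t − P t ∈ (−1/2, 1/2]` for the nearest integer matches the
principal determination `(−π, π]` of `Real.Angle.toReal`, so `2π dist(t, ℤ) = |toReal (2π t)|`, and
both sides of the identity are the absolute principal value of one and the same angle. The energy
bound then follows bond by bond from `|v(i) − v(j)| ≤ d_{S¹}(v(i), v(j))`, the sums being finite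
because `Ω` is bounded.
-/

open Real

lemma sub_Pint_mem_Ioc (t : ℝ) : t - Pint t ∈ Set.Ioc (-(1 / 2)) (1 / 2) := by
  have hlt : (Pint t : ℝ) < t - 1 / 2 + 1 := Int.ceil_lt_add_one _
  have hle : t - 1 / 2 ≤ (Pint t : ℝ) := Int.le_ceil _
  constructor <;> linarith

lemma two_pi_mul_distZ (t : ℝ) : 2 * π * distZ t = |((2 * π * t : ℝ) : Angle).toReal| := by
  obtain ⟨hlo, hhi⟩ := sub_Pint_mem_Ioc t
  have hcoe : ((2 * π * t : ℝ) : Angle) = ((2 * π * (t - Pint t) : ℝ) : Angle) := by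
    rw [mul_sub, Angle.coe_sub, mul_comm (2 * π) (Pint t : ℝ), Angle.intCast_mul_eq_zsmul,
      Angle.coe_two_pi, zsmul_zero, sub_zero]
  rw [hcoe, Angle.toReal_coe_eq_self_iff.2 ⟨by nlinarith [pi_pos], by nlinarith [pi_pos]⟩,
    distZ, abs_mul, abs_of_pos two_pi_pos]

lemma distZ_neg (t : ℝ) : distZ (-t) = distZ t := by
  have h := two_pi_mul_distZ (-t)
  rw [mul_neg, Angle.coe_neg, Angle.abs_toReal_neg, ← two_pi_mul_distZ] at h
  exact mul_left_cancel₀ two_pi_pos.ne' h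

lemma abs_betaE (u : ℤ × ℤ → ℝ) (i j : ℤ × ℤ) : |betaE u i j| = distZ (u i - u j) := by
  rw [← distZ_neg, neg_sub]
  rfl

lemma coe_two_pi_mul_phaseu (v : ℤ × ℤ → ℂ) (l : ℤ × ℤ) :
    ((2 * π * phaseu v l : ℝ) : Angle) = (v l).arg := by
  have hdiv : 2 * π * ((v l).arg / (2 * π)) = (v l).arg := mul_div_cancel₀ _ two_pi_pos.ne'
  unfold phaseu
  split_ifs
  · rw [hdiv]
  · rw [mul_add, mul_one, hdiv, Angle.coe_add, Angle.coe_two_pi, add_zero]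

lemma dS1_eq_abs_toReal_coe_arg_sub {a b : ℂ} (ha : a ≠ 0) (hb : b ≠ 0) :
    dS1 a b = |((a.arg : Angle) - b.arg).toReal| := by
  rw [dS1, ← Complex.arg_coe_angle_toReal_eq_arg,
    Complex.arg_mul_coe_angle ha ((map_ne_zero _).2 hb), Complex.arg_conj_coe_angle, sub_eq_add_neg]

lemma two_pi_mul_distZ_phaseu_sub {v : ℤ × ℤ → ℂ} {i j : ℤ × ℤ} (hi : v i ≠ 0) (hj : v j ≠ 0) :
    2 * π * distZ (phaseu v i - phaseu v j) = dS1 (v i) (v j) := by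
  rw [two_pi_mul_distZ, mul_sub, Angle.coe_sub, coe_two_pi_mul_phaseu, coe_two_pi_mul_phaseu,
    dS1_eq_abs_toReal_coe_arg_sub hi hj]

lemma norm_sub_one_le_abs_arg {w : ℂ} (hw : ‖w‖ = 1) : ‖w - 1‖ ≤ |w.arg| := by
  have hexp : Complex.exp (Complex.I * w.arg) = w := by
    simpa [hw, mul_comm Complex.I] using Complex.norm_mul_exp_arg_mul_I w
  simpa [hexp] using Real.norm_exp_I_mul_ofReal_sub_one_le (x := w.arg)

lemma norm_sub_le_dS1 {a b : ℂ} (ha : ‖a‖ = 1) (hb : ‖b‖ = 1) : ‖a - b‖ ≤ dS1 a b := by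
  have hnorm : ‖a - b‖ = ‖a * (starRingEnd ℂ) b - 1‖ :=
    calc ‖a - b‖ = ‖(a - b) * (starRingEnd ℂ) b‖ := by rw [norm_mul, Complex.norm_conj, hb, mul_one]
      _ = ‖a * (starRingEnd ℂ) b - 1‖ := by
        rw [sub_mul, Complex.mul_conj, Complex.normSq_eq_norm_sq, hb, one_pow, Complex.ofReal_one]
  rw [hnorm]
  refine norm_sub_one_le_abs_arg ?_
  rw [norm_mul, Complex.norm_conj, ha, hb, one_mul]

lemma dist_pt {ε : ℝ} (hε : 0 ≤ ε) (i j : ℤ × ℤ) : dist (pt ε i) (pt ε j) = ε * dist i j := by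
  simp only [pt, Prod.dist_eq, Real.dist_eq, Int.dist_eq, ← mul_sub, abs_mul, abs_of_nonneg hε,
    mul_max_of_nonneg _ _ hε]

lemma finite_setOf_latticePt {ε : ℝ} (hε : 0 < ε) {Ω : Set (ℝ × ℝ)}
    (hΩ : Bornology.IsBounded Ω) : {i | latticePt ε Ω i}.Finite := by
  have hanti : AntilipschitzWith (Real.toNNReal ε⁻¹) (pt ε) :=
    AntilipschitzWith.of_le_mul_dist fun i j => by
      rw [dist_pt hε.le, Real.coe_toNNReal _ (inv_nonneg.2 hε.le), inv_mul_cancel_left₀ hε.ne']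
  exact (Metric.isCompact_of_isClosed_isBounded (isClosed_discrete _)
    (hanti.isBounded_preimage hΩ)).finite_of_discrete

lemma finite_bond {ε : ℝ} (hε : 0 < ε) {Ω : Set (ℝ × ℝ)} (hΩ : Bornology.IsBounded Ω) :
    Finite {b : (ℤ × ℤ) × (ℤ × ℤ) // bond ε Ω b.1 b.2} :=
  have hpts := finite_setOf_latticePt hε hΩ
  Set.Finite.to_subtype <| (hpts.prod hpts).subset fun _ hb => ⟨hb.1, hb.2.1⟩

lemma XYen_le_mul_SDen {ε : ℝ} {Ω : Set (ℝ × ℝ)}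
    [Finite {b : (ℤ × ℤ) × (ℤ × ℤ) // bond ε Ω b.1 b.2}] {v : ℤ × ℤ → ℂ} {u : ℤ × ℤ → ℝ} {C : ℝ}
    (h : ∀ i j, bond ε Ω i j → ‖v i - v j‖ ^ 2 ≤ C * betaE u i j ^ 2) :
    XYen ε Ω v ≤ C * SDen ε Ω u := by
  rw [XYen, SDen, mul_left_comm]
  gcongr
  rw [← tsum_mul_left]
  exact Summable.tsum_le_tsum (fun b => h _ _ b.2) .of_finite .of_finite

theorem phase_geodesic_identity_and_XY_le_SD_general
    (Ω : Set (ℝ × ℝ)) (hΩb : Bornology.IsBounded Ω)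
    (ε : ℝ) (hε : 0 < ε) (v : ℤ × ℤ → ℂ) (hv : ∀ l, ‖v l‖ = 1) :
    (∀ i j : ℤ × ℤ, bond ε Ω i j →
      2 * Real.pi * distZ (phaseu v i - phaseu v j) = dS1 (v i) (v j)) ∧
    XYen ε Ω v ≤ 4 * Real.pi ^ 2 * SDen ε Ω (phaseu v) := by
  have hne : ∀ l, v l ≠ 0 := fun l => norm_ne_zero_iff.1 (by simp [hv l])
  have hbond : ∀ i j, 2 * π * distZ (phaseu v i - phaseu v j) = dS1 (v i) (v j) :=
    fun i j => two_pi_mul_distZ_phaseu_sub (hne i) (hne j)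
  refine ⟨fun i j _ => hbond i j, ?_⟩
  have := finite_bond hε hΩb
  refine XYen_le_mul_SDen fun i j _ => ?_
  calc ‖v i - v j‖ ^ 2 ≤ dS1 (v i) (v j) ^ 2 :=
        pow_le_pow_left₀ (norm_nonneg _) (norm_sub_le_dS1 (hv i) (hv j)) 2
    _ = 4 * π ^ 2 * betaE (phaseu v) i j ^ 2 := by
        rw [← hbond, ← abs_betaE, mul_pow, sq_abs]
        ring

/-- For every spin field `v : Ω⁰_ε → S¹` and every bond `(i,j) ∈ Ω¹_ε`,
`2π · dist(u(v)(i) − u(v)(j), ℤ) = d_{S¹}(v(i), v(j))`, where `u(v) = θ(v)/2π`.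
Consequently `XY_ε(v) ≤ 4π² SD_ε(u(v))`. -/
theorem phase_geodesic_identity_and_XY_le_SD
    (Ω : Set (ℝ × ℝ)) (hΩo : IsOpen Ω) (hΩb : Bornology.IsBounded Ω)
    (ε : ℝ) (hε : 0 < ε) (v : ℤ × ℤ → ℂ) (hv : ∀ l, ‖v l‖ = 1) :
    (∀ i j : ℤ × ℤ, bond ε Ω i j →
      2 * Real.pi * distZ (phaseu v i - phaseu v j) = dS1 (v i) (v j)) ∧
    XYen ε Ω v ≤ 4 * Real.pi ^ 2 * SDen ε Ω (phaseu v) :=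
  phase_geodesic_identity_and_XY_le_SD_general Ω hΩb ε hε v hv
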